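/- Assume γ + κ = 0 with κ > 0 and let δ := e^{γ−κ} ∈ (0,1). Let ν be a measure on ℝ² with ∫ ‖z‖² ν(dz) < ∞, and define W := ∫₀¹ exp(t·B̃) · (∫_{ℝ²} z·zᵀ ν(dz)) · exp(t·B̃)ᵀ dt. Then uᵀ·W·u = ∫ (z₁+z₂)² ν(dz) and vᵀ·W·v = ((1−δ²)/(2·log(δ⁻¹))) · ∫ (z₁−z₂)² ν(dz). -/

import Mathlib

/-!
Since `B̃` is symmetric, `u` and `v` are eigenvectors of `B̃ᵀ` with eigenvalues `γ + κ = 0` and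
`γ - κ = log δ`. For such an eigenvector `x` with eigenvalue `λ` we get `exp(t B̃)ᵀ x = e^{λt} x`,
hence `xᵀ W x = (∫₀¹ e^{2λt} dt) · xᵀ Z x`, and `xᵀ Z x = ∫ (x ⬝ z)² dν`. The time integral is `1`
for `λ = 0` and `(δ² - 1) / (2 log δ)` for `λ = log δ`.
-/

open Matrix MeasureTheory

namespace Matrix

variable {ι : Type*} [Fintype ι]

theorem dotProduct_mulVec_mul_mul_transpose {R : Type*} [CommSemiring R] (M Z : Matrix ι ι R)
    (x : ι → R) : x ⬝ᵥ ((M * Z * Mᵀ) *ᵥ x) = (Mᵀ *ᵥ x) ⬝ᵥ (Z *ᵥ (Mᵀ *ᵥ x)) := by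
  rw [← mulVec_mulVec, ← mulVec_mulVec, dotProduct_mulVec, mulVec_transpose]

theorem dotProduct_mulVec_eq_integral {α : Type*} [MeasurableSpace α] {μ : Measure α}
    {F : α → Matrix ι ι ℝ} (hF : ∀ a b, Integrable (fun t => F t a b) μ)
    {W : Matrix ι ι ℝ} (hW : ∀ a b, W a b = ∫ t, F t a b ∂μ) (x : ι → ℝ) :
    x ⬝ᵥ (W *ᵥ x) = ∫ t, x ⬝ᵥ (F t *ᵥ x) ∂μ := by
  have hterm : ∀ i j, Integrable (fun t => x i * (F t i j * x j)) μ :=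
    fun i j => ((hF i j).mul_const _).const_mul _
  simp only [dotProduct, mulVec, hW, Finset.mul_sum]
  rw [integral_finsetSum _ fun i _ => integrable_finsetSum _ fun j _ => hterm i j]
  refine Finset.sum_congr rfl fun i _ => ?_
  rw [integral_finsetSum _ fun j _ => hterm i j]
  refine Finset.sum_congr rfl fun j _ => ?_
  rw [integral_const_mul, integral_mul_const]

theorem integrable_apply_mul_apply_of_integrable_norm_sq {ν : Measure (ι → ℝ)}
    (hν : Integrable (fun z : ι → ℝ => ‖z‖ ^ 2) ν) (a b : ι) :
    Integrable (fun z : ι → ℝ => z a * z b) ν := by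
  refine hν.mono' (by fun_prop) (Filter.Eventually.of_forall fun z => ?_)
  rw [norm_mul, sq]
  exact mul_le_mul (norm_le_pi_norm z a) (norm_le_pi_norm z b) (norm_nonneg _) (norm_nonneg _)

theorem dotProduct_mulVec_eq_integral_dotProduct_sq {ν : Measure (ι → ℝ)}
    (hν : Integrable (fun z : ι → ℝ => ‖z‖ ^ 2) ν) {Z : Matrix ι ι ℝ}
    (hZ : ∀ a b, Z a b = ∫ z, z a * z b ∂ν) (x : ι → ℝ) :
    x ⬝ᵥ (Z *ᵥ x) = ∫ z, (x ⬝ᵥ z) ^ 2 ∂ν := by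
  rw [dotProduct_mulVec_eq_integral (F := fun z => vecMulVec z z)
    (integrable_apply_mul_apply_of_integrable_norm_sq hν) hZ]
  congr 1 with z
  rw [vecMulVec_mulVec, op_smul_eq_smul, dotProduct_smul, smul_eq_mul, dotProduct_comm z, sq]

variable [DecidableEq ι]

open scoped Norms.Operator in
theorem exp_mulVec_of_mulVec_eq_smul {A : Matrix ι ι ℝ} {x : ι → ℝ} {c : ℝ}
    (h : A *ᵥ x = c • x) : NormedSpace.exp A *ᵥ x = Real.exp c • x := by
  have hpow : ∀ n : ℕ, A ^ n *ᵥ x = c ^ n • x := by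
    intro n
    induction n with
    | zero => simp
    | succ n ih => rw [pow_succ', ← mulVec_mulVec, ih, mulVec_smul, h, smul_smul, pow_succ]
  have hA := (NormedSpace.exp_series_hasSum_exp' (𝕂 := ℝ) A).map
    (mulVec.addMonoidHomLeft x) (continuous_id.matrix_mulVec continuous_const)
  have hc := (NormedSpace.exp_series_hasSum_exp' (𝕂 := ℝ) c).smul_const x
  rw [Real.exp_eq_exp_ℝ]
  refine hA.unique (hc.congr_fun fun n => ?_)
  simp [mulVec.addMonoidHomLeft, smul_mulVec, hpow, smul_smul]

open scoped Norms.Operator in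
theorem continuous_exp_smul (A : Matrix ι ι ℝ) :
    Continuous fun t : ℝ => NormedSpace.exp (t • A) :=
  NormedSpace.exp_continuous.comp (continuous_id.smul continuous_const)

theorem dotProduct_mulVec_eq_integral_exp_mul_of_transpose_mulVec_eq_smul
    {A Z W : Matrix ι ι ℝ} {x : ι → ℝ} {c : ℝ}
    (hW : ∀ a b, W a b = ∫ t in (0:ℝ)..1,
      (NormedSpace.exp (t • A) * Z * (NormedSpace.exp (t • A))ᵀ) a b)
    (hx : Aᵀ *ᵥ x = c • x) :
    x ⬝ᵥ (W *ᵥ x) = (∫ t in (0:ℝ)..1, Real.exp (2 * c * t)) * (x ⬝ᵥ (Z *ᵥ x)) := by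
  have hcont : Continuous fun t : ℝ =>
      NormedSpace.exp (t • A) * Z * (NormedSpace.exp (t • A))ᵀ :=
    ((continuous_exp_smul A).matrix_mul continuous_const).matrix_mul
      (continuous_exp_smul A).matrix_transpose
  have hquad : ∀ t : ℝ,
      x ⬝ᵥ ((NormedSpace.exp (t • A) * Z * (NormedSpace.exp (t • A))ᵀ) *ᵥ x)
        = Real.exp (2 * c * t) * (x ⬝ᵥ (Z *ᵥ x)) := by
    intro t
    have heig : (t • A)ᵀ *ᵥ x = (t * c) • x := by
      rw [transpose_smul, smul_mulVec, hx, smul_smul]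
    rw [dotProduct_mulVec_mul_mul_transpose, ← exp_transpose, exp_mulVec_of_mulVec_eq_smul heig,
      mulVec_smul, smul_dotProduct, dotProduct_smul, smul_eq_mul, smul_eq_mul, ← mul_assoc,
      ← Real.exp_add]
    ring_nf
  simp only [intervalIntegral.integral_of_le zero_le_one] at hW ⊢
  rw [dotProduct_mulVec_eq_integral (fun a b =>
    (hcont.matrix_elem a b).integrableOn_Icc.mono_set Set.Ioc_subset_Icc_self) hW,
    ← integral_mul_const]
  simp_rw [hquad]

end Matrix

theorem integral_exp_const_mul {a b c : ℝ} (hc : c ≠ 0) :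
    ∫ t in a..b, Real.exp (c * t) = (Real.exp (c * b) - Real.exp (c * a)) / c := by
  rw [intervalIntegral.integral_comp_mul_left Real.exp hc, integral_exp, smul_eq_mul,
    inv_mul_eq_div]

theorem transpose_doublySymm_mulVec_one_one (γ κ : ℝ) :
    (!![γ, κ; κ, γ] : Matrix (Fin 2) (Fin 2) ℝ)ᵀ *ᵥ ![1, 1] = (γ + κ) • ![1, 1] := by
  ext i; fin_cases i <;> simp [mulVec, dotProduct, Fin.sum_univ_two]; ring

theorem transpose_doublySymm_mulVec_one_neg_one (γ κ : ℝ) :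
    (!![γ, κ; κ, γ] : Matrix (Fin 2) (Fin 2) ℝ)ᵀ *ᵥ ![1, -1] = (γ - κ) • ![1, -1] := by
  ext i; fin_cases i <;> simp [mulVec, dotProduct, Fin.sum_univ_two] <;> ring

/-- In the doubly symmetric critical case `γ + κ = 0`, `κ > 0`, with
`δ = e^{γ−κ} ∈ (0,1)` and a measure `ν` on `ℝ²` with finite second moment, the matrix
`W = ∫₀¹ exp(t·B̃)·(∫ z·zᵀ dν)·exp(t·B̃)ᵀ dt` (entrywise integrals) satisfies
`uᵀ·W·u = ∫ (z₁+z₂)² dν` and `vᵀ·W·v = ((1−δ²)/(2·log(δ⁻¹)))·∫ (z₁−z₂)² dν`,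
where `u = (1,1)ᵀ` and `v = (1,−1)ᵀ`. -/
theorem quadratic_form_W (γ κ : ℝ) (hcrit : γ + κ = 0) (hκ : 0 < κ)
    (δ : ℝ) (hδ : δ = Real.exp (γ - κ))
    (ν : Measure (Fin 2 → ℝ)) (hν : Integrable (fun z : Fin 2 → ℝ => ‖z‖ ^ 2) ν)
    (Z : Matrix (Fin 2) (Fin 2) ℝ)
    (hZ : ∀ a b, Z a b = ∫ z : Fin 2 → ℝ, z a * z b ∂ν)
    (W : Matrix (Fin 2) (Fin 2) ℝ)
    (hW : ∀ a b, W a b = ∫ t in (0:ℝ)..1,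
      (NormedSpace.exp (t • (!![γ, κ; κ, γ] : Matrix (Fin 2) (Fin 2) ℝ))
        * Z
        * (NormedSpace.exp (t • (!![γ, κ; κ, γ] : Matrix (Fin 2) (Fin 2) ℝ)))ᵀ) a b) :
    (![1, 1] : Fin 2 → ℝ) ⬝ᵥ (W *ᵥ (![1, 1] : Fin 2 → ℝ))
        = ∫ z : Fin 2 → ℝ, (z 0 + z 1) ^ 2 ∂ν
      ∧ (![1, -1] : Fin 2 → ℝ) ⬝ᵥ (W *ᵥ (![1, -1] : Fin 2 → ℝ))
        = (1 - δ ^ 2) / (2 * Real.log δ⁻¹) * ∫ z : Fin 2 → ℝ, (z 0 - z 1) ^ 2 ∂ν := by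
  have hZν := dotProduct_mulVec_eq_integral_dotProduct_sq hν hZ
  have hdiff : 2 * (γ - κ) ≠ 0 := by linarith
  constructor
  · rw [dotProduct_mulVec_eq_integral_exp_mul_of_transpose_mulVec_eq_smul hW
      (transpose_doublySymm_mulVec_one_one γ κ), hcrit, hZν]
    simp [dotProduct, Fin.sum_univ_two]
  · rw [dotProduct_mulVec_eq_integral_exp_mul_of_transpose_mulVec_eq_smul hW
      (transpose_doublySymm_mulVec_one_neg_one γ κ), integral_exp_const_mul hdiff, hZν, hδ,
      Real.log_inv, Real.log_exp, ← Real.exp_nat_mul]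
    congr 1
    · rw [mul_one, mul_zero, Real.exp_zero, Nat.cast_ofNat, mul_neg, div_neg, ← neg_div, neg_sub]
    · simp [dotProduct, Fin.sum_univ_two, sub_eq_add_neg]
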